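/- Soft-DTW can be negative: there exist sequences y, ŷ (e.g., y = ŷ a constant sequence of length ≥ 2, so all entries of C are 0) and γ > 0 for which SoftDTW_γ(y,ŷ) = -γ log|Π(T,T)| < 0, even though the sequences are identical; hence SoftDTW is not a divergence. -/
import Mathlib


/-- Frobenius inner product of two real matrices. -/
def frob {T : ℕ} (C P : Matrix (Fin T) (Fin T) ℝ) : ℝ :=
  ∑ i, ∑ j, C i j * P i j

/-- Soft-DTW between sequences `y, ŷ` with cost `C_{ij} = (y_i - ŷ_j)²`. -/
noncomputable def softDTWseq {T : ℕ} (Pi : Finset (Matrix (Fin T) (Fin T) ℝ))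
    (y yhat : Fin T → ℝ) (γ : ℝ) : ℝ :=
  -γ * Real.log (∑ P ∈ Pi, Real.exp (-(frob (fun i j => (y i - yhat j) ^ 2) P) / γ))

/-- Soft-DTW can be negative: whenever the set of warping paths has at least two
elements (true for `T ≥ 2`), there are identical sequences `y = ŷ` whose Soft-DTW
value equals `-γ log|Π| < 0`; hence Soft-DTW is not a divergence. -/
theorem softDTW_can_be_negative {T : ℕ}
    (Pi : Finset (Matrix (Fin T) (Fin T) ℝ)) (hPi : 2 ≤ Pi.card)
    (γ : ℝ) (hγ : 0 < γ) :
    ∃ y yhat : Fin T → ℝ, y = yhat ∧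
      softDTWseq Pi y yhat γ = -γ * Real.log Pi.card ∧
      -γ * Real.log Pi.card < 0 := by
  refine ⟨0, 0, rfl, ?_, ?_⟩
  · have h : ∀ P ∈ Pi, Real.exp (-(frob (fun i j => ((0:Fin T → ℝ) i - (0:Fin T → ℝ) j) ^ 2) P) / γ) = 1 := by
      intro P _
      simp [frob]
    unfold softDTWseq
    rw [Finset.sum_congr rfl h, Finset.sum_const, nsmul_eq_mul, mul_one]
  · have h1 : (1:ℝ) < Pi.card := by exact_mod_cast lt_of_lt_of_le one_lt_two hPi
    have := Real.log_pos h1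
    nlinarith
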